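/- Let M be a finite monoid and x, y ∈ M with x J y and x ≤_L y. Then x L y. -/
import Mathlib


def JLe {M : Type*} [Monoid M] (x y : M) : Prop := ∃ a b : M, x = a * y * b

def JEq {M : Type*} [Monoid M] (x y : M) : Prop := JLe x y ∧ JLe y x

lemma exists_idem_pow {M : Type*} [Monoid M] [Finite M] (u : M) :
    ∃ n, 1 ≤ n ∧ u ^ n * u ^ n = u ^ n := by
  obtain ⟨m, k, hne, heq⟩ := Finite.exists_ne_map_eq_of_infinite (fun n : ℕ => u ^ n)
  wlog hmk : m < k generalizing m k
  · exact this k m hne.symm heq.symm (by omega)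
  set p := k - m with hp
  have hpm : k = m + p := by omega
  have hbase : u ^ (m + p) = u ^ m := by rw [← hpm]; exact heq.symm
  have hstep : ∀ i j, u ^ (m + j + i * p) = u ^ (m + j) := by
    intro i
    induction i with
    | zero => simp
    | succ i ih =>
      intro j
      calc u ^ (m + j + (i + 1) * p) = u ^ (m + (p + j) + i * p) := by congr 1; ring
        _ = u ^ (m + (p + j)) := ih (p + j)
        _ = u ^ (m + p) * u ^ j := by rw [← pow_add]; congr 1; ring
        _ = u ^ m * u ^ j := by rw [hbase]
        _ = u ^ (m + j) := by rw [pow_add]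
  have hp1 : 1 ≤ p := by omega
  refine ⟨p * (m + 1), Nat.one_le_iff_ne_zero.mpr (by positivity), ?_⟩
  set n := p * (m + 1) with hn
  have hnm : m + 1 ≤ n := Nat.le_mul_of_pos_left _ hp1
  have hcomm : (m + 1) * p = n := by rw [hn]; ring
  have hsum : n + n = m + (n - m) + (m + 1) * p := by rw [hcomm]; omega
  rw [← pow_add, hsum, hstep (m + 1) (n - m)]
  congr 1
  omega

/-- In a finite monoid, if x J y and x ≤_L y, then x L y. -/
theorem lLe_and_jEq_imp_lEq {M : Type*} [Monoid M] [Finite M] (x y : M)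
    (hJ : JEq x y) (hL : ∃ α : M, x = α * y) : ∃ β : M, y = β * x := by
  obtain ⟨α, hα⟩ := hL
  obtain ⟨a, b, hab⟩ := hJ.2
  have key : y = (a * α) * y * b := by
    rw [mul_assoc a α y, ← hα]; exact hab
  set u := a * α with hu
  have hiter : ∀ n, y = u ^ n * y * b ^ n := by
    intro n
    induction n with
    | zero => simp
    | succ n ih =>
      calc y = u * y * b := key
        _ = u * (u ^ n * y * b ^ n) * b := by rw [← ih]
        _ = u ^ (n + 1) * y * b ^ (n + 1) := by
            rw [pow_succ' u, pow_succ b]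
            simp [mul_assoc]
  obtain ⟨n, hn1, hidem⟩ := exists_idem_pow u
  have hy : y = u ^ n * y := by
    calc y = u ^ n * y * b ^ n := hiter n
      _ = (u ^ n * u ^ n) * y * b ^ n := by rw [hidem]
      _ = u ^ n * (u ^ n * y * b ^ n) := by noncomm_ring
      _ = u ^ n * y := by rw [← hiter n]
  refine ⟨u ^ (n - 1) * a, ?_⟩
  have : u ^ n = u ^ (n - 1) * u := by
    rw [← pow_succ]; congr 1; omega
  rw [hy, this, hu, hα]
  noncomm_ring
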